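/- For every i ∈ {1,…,4}, the momentum components T_{(m)(1)}^{(1)(i)} := (h¹¹(t) e^{2σ(x)} 𝒫^{−1/2}/(8𝒦)) · p_m/p_i + δ^i_m [ (h¹¹(t) e^{2σ(x)} 𝒫^{−1/2})/(4𝒦) + 2 e^{−2σ(x)} 𝒫^{1/2} Σ₁₁/𝒦 ] of the momentum stress-energy d-tensor satisfy the third geometrical conservation-like law: Σ_{m=1}^{4} [ ∂T_{(m)(1)}^{(1)(i)}/∂p_m − Σ_{r=1}^{4} T_{(r)(1)}^{(1)(i)} C_{m(1)}^{r(m)} + Σ_{r=1}^{4} T_{(m)(1)}^{(1)(r)} C_{r(1)}^{i(m)} ] = (e^{−2σ(x)} 𝒫^{1/2}/𝒦) · [ Σ₁₁/p_i + 2 ∂Σ₁₁/∂p_i ], where Σ₁₁ := Σ_{1 ≤ i < j ≤ 4} σ_{ij}(x)/(p_i p_j). -/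

import Mathlib

set_option maxHeartbeats 1600000

/-- Partial derivative of `f : (Fin 4 → ℝ) → ℝ` with respect to the `i`-th coordinate. -/
noncomputable def pd (f : (Fin 4 → ℝ) → ℝ) (i : Fin 4) (v : Fin 4 → ℝ) : ℝ :=
  deriv (fun s => f (Function.update v i s)) (v i)

/-- Kronecker delta. -/
noncomputable def kron (i j : Fin 4) : ℝ := if i = j then 1 else 0

/-- `𝖢_i^{jk} = (1 − 2δ^{jk} − 2δ^j_i − 2δ^k_i + 8δ^j_i δ^k_i)/8`. -/
noncomputable def CC (i j k : Fin 4) : ℝ :=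
  (1 - 2 * kron j k - 2 * kron i j - 2 * kron i k + 8 * kron i j * kron i k) / 8

/-- The vertical d-tensor `C_{i(1)}^{j(k)} = 𝖢_i^{jk} p_i/(p_j p_k)`. -/
noncomputable def Cv (p : Fin 4 → ℝ) (i j k : Fin 4) : ℝ :=
  CC i j k * p i / (p j * p k)

/-- `σ_{ij} = ∂²σ/∂x^i∂x^j`. -/
noncomputable def sig2 (σ : (Fin 4 → ℝ) → ℝ) (x : Fin 4 → ℝ) (i j : Fin 4) : ℝ :=
  pd (fun x' => pd σ i x') j x

/-- `Σ₁₁ = Σ_{i<j} σ_{ij}(x)/(p_i p_j)`. -/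
noncomputable def sig11 (σ : (Fin 4 → ℝ) → ℝ) (x p : Fin 4 → ℝ) : ℝ :=
  ∑ i, ∑ j, if i < j then sig2 σ x i j / (p i * p j) else 0

/-- The momentum stress-energy components
`T_{(m)(1)}^{(1)(i)} = (h¹¹ e^{2σ} 𝒫^{−1/2}/(8𝒦)) p_m/p_i
+ δ^i_m [ h¹¹ e^{2σ} 𝒫^{−1/2}/(4𝒦) + 2 e^{−2σ} 𝒫^{1/2} Σ₁₁/𝒦 ]`. -/
noncomputable def Tm (σ : (Fin 4 → ℝ) → ℝ) (h : ℝ → ℝ) (K t : ℝ) (x p : Fin 4 → ℝ)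
    (m i : Fin 4) : ℝ :=
  (h t)⁻¹ * Real.exp (2 * σ x) / Real.sqrt (∏ k, p k) / (8 * K) * (p m / p i)
    + kron i m * ((h t)⁻¹ * Real.exp (2 * σ x) / Real.sqrt (∏ k, p k) / (4 * K)
        + 2 * Real.exp (-2 * σ x) * Real.sqrt (∏ k, p k) * sig11 σ x p / K)

/-- Auxiliary: the sum of those `sig11` terms whose index pair contains `m`. -/
noncomputable def Sm (σ : (Fin 4 → ℝ) → ℝ) (x p : Fin 4 → ℝ) (m : Fin 4) : ℝ :=
  ∑ i, ∑ j, if i < j ∧ (i = m ∨ j = m) then sig2 σ x i j / (p i * p j) else 0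

lemma sig11_update (σ : (Fin 4 → ℝ) → ℝ) (x p : Fin 4 → ℝ) (hp : ∀ i, 0 < p i)
    (m : Fin 4) (s : ℝ) (hs : s ≠ 0) :
    sig11 σ x (Function.update p m s)
      = (sig11 σ x p - Sm σ x p m) + p m * Sm σ x p m / s := by
  have h0 := (hp 0).ne'
  have h1 := (hp 1).ne'
  have h2 := (hp 2).ne'
  have h3 := (hp 3).ne'
  have hm : m = 0 ∨ m = 1 ∨ m = 2 ∨ m = 3 := by omega
  rcases hm with rfl | rfl | rfl | rfl <;>
  · simp (config := {decide := true}) only [sig11, Sm, Fin.sum_univ_four,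
      Function.update_self, Function.update_of_ne, ne_eq, if_true, if_false]
    field_simp
    ring

lemma pd_sig11 (σ : (Fin 4 → ℝ) → ℝ) (x p : Fin 4 → ℝ) (hp : ∀ i, 0 < p i) (m : Fin 4) :
    pd (fun p' => sig11 σ x p') m p = -Sm σ x p m / p m := by
  have hpm := hp m
  have hne : (fun s => sig11 σ x (Function.update p m s))
      =ᶠ[nhds (p m)] (fun s => (sig11 σ x p - Sm σ x p m) + (p m * Sm σ x p m) * s⁻¹) := by
    filter_upwards [eventually_ne_nhds hpm.ne'] with s hs
    rw [sig11_update σ x p hp m s hs, div_eq_mul_inv]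
  have hD := ((hasDerivAt_inv hpm.ne').const_mul (p m * Sm σ x p m)).const_add
      (sig11 σ x p - Sm σ x p m)
  rw [pd, hne.deriv_eq, hD.deriv]
  field_simp

lemma deriv_sqrt_combo (a b : ℝ) {s0 : ℝ} (hs : 0 < s0) :
    deriv (fun s => a * Real.sqrt s + b / Real.sqrt s) s0
      = a / (2*Real.sqrt s0) - b / (2*s0*Real.sqrt s0) := by
  have h1 : HasDerivAt Real.sqrt (1/(2*Real.sqrt s0)) s0 := Real.hasDerivAt_sqrt hs.ne'
  have hS0 : Real.sqrt s0 ≠ 0 := (Real.sqrt_pos.mpr hs).ne'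
  have h4 := (h1.const_mul a).add ((h1.inv hS0).const_mul b)
  rw [show (fun s => a*Real.sqrt s + b/Real.sqrt s)
      = (fun s => a*Real.sqrt s + b*(Real.sqrt s)⁻¹) from by
    funext s; rw [div_eq_mul_inv]]
  rw [(show HasDerivAt (fun s => a*Real.sqrt s + b*(Real.sqrt s)⁻¹) _ s0 from h4).deriv]
  have hsq : Real.sqrt s0 ^ 2 = s0 := Real.sq_sqrt hs.le
  rw [← hsq]
  field_simp
  rw [Real.sq_sqrt (sq_nonneg (Real.sqrt s0))]
  ring

lemma pd_Tm (σ : (Fin 4 → ℝ) → ℝ) (h : ℝ → ℝ) (K t : ℝ) (x p : Fin 4 → ℝ)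
    (hp : ∀ i, 0 < p i) (hK : K ≠ 0) (hht : h t ≠ 0) (m i : Fin 4) :
    pd (fun p' => Tm σ h K t x p' m i) m p =
      if i = m then
        2 * Real.exp (-2*σ x) * Real.sqrt (∏ k, p k) / K
            * (sig11 σ x p - 2 * Sm σ x p m) / (2 * p m)
          - 3 * ((h t)⁻¹ * Real.exp (2*σ x) / Real.sqrt (∏ k, p k)) / (16 * K * p m)
      else (h t)⁻¹ * Real.exp (2*σ x) / Real.sqrt (∏ k, p k) / (16 * K * p i) := by
  have hpm := hp m
  set c : ℝ := ∏ k ∈ Finset.univ.erase m, p k with hc_def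
  have hc : 0 < c := Finset.prod_pos fun k _ => hp k
  have hP : ∏ k, p k = p m * c := (Finset.mul_prod_erase Finset.univ p (Finset.mem_univ m)).symm
  have hprodupd : ∀ s : ℝ, (∏ k, Function.update p m s k) = s * c := by
    intro s
    rw [Finset.prod_update_of_mem (Finset.mem_univ m), hc_def, Finset.sdiff_singleton_eq_erase]
  have hsc : Real.sqrt c ≠ 0 := (Real.sqrt_pos.mpr hc).ne'
  have hS : Real.sqrt (∏ k, p k) = Real.sqrt (p m) * Real.sqrt c := by
    rw [hP, Real.sqrt_mul hpm.le]
  have hvpm : Real.sqrt (p m) ≠ 0 := (Real.sqrt_pos.mpr hpm).ne'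
  have hvv : Real.sqrt (p m) * Real.sqrt (p m) = p m := Real.mul_self_sqrt hpm.le
  by_cases him : i = m
  · subst him
    have hev : (fun s => Tm σ h K t x (Function.update p i s) i i)
        =ᶠ[nhds (p i)] (fun s =>
          (2 * Real.exp (-2*σ x) / K * Real.sqrt c * (sig11 σ x p - Sm σ x p i)) * Real.sqrt s
          + (3 * (h t)⁻¹ * Real.exp (2*σ x) / (8*K) / Real.sqrt c
              + 2 * Real.exp (-2*σ x) / K * Real.sqrt c * (p i * Sm σ x p i)) / Real.sqrt s) := by
      filter_upwards [eventually_gt_nhds hpm] with s hs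
      obtain ⟨u, hu, rfl⟩ : ∃ u : ℝ, 0 < u ∧ s = u * u :=
        ⟨Real.sqrt s, Real.sqrt_pos.mpr hs, (Real.mul_self_sqrt hs.le).symm⟩
      rw [Tm, hprodupd, Real.sqrt_mul (mul_self_nonneg u), Real.sqrt_mul_self hu.le,
        Function.update_self, sig11_update σ x p hp i _ hs.ne', kron, if_pos rfl]
      field_simp [hK, hu.ne', hsc, hht]
      try ring_nf
      try field_simp [hu.ne', hsc, hht, hK]
      try ring
    rw [pd, hev.deriv_eq, deriv_sqrt_combo _ _ hpm, if_pos rfl, hS]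
    set v := Real.sqrt (p i) with hv
    rw [← hvv]
    field_simp [hK, hvpm, hsc, hht]
    try ring_nf
    try field_simp [hvpm, hsc, hht, hK]
    try ring
  · have hev : (fun s => Tm σ h K t x (Function.update p m s) m i)
        =ᶠ[nhds (p m)] (fun s =>
          ((h t)⁻¹ * Real.exp (2*σ x) / (8*K) / (Real.sqrt c * p i)) * Real.sqrt s
            + 0 / Real.sqrt s) := by
      filter_upwards [eventually_gt_nhds hpm] with s hs
      obtain ⟨u, hu, rfl⟩ : ∃ u : ℝ, 0 < u ∧ s = u * u :=
        ⟨Real.sqrt s, Real.sqrt_pos.mpr hs, (Real.mul_self_sqrt hs.le).symm⟩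
      rw [Tm, hprodupd, Real.sqrt_mul (mul_self_nonneg u), Real.sqrt_mul_self hu.le,
        Function.update_self, Function.update_of_ne him, kron, if_neg him]
      have hpi := (hp i).ne'
      field_simp [hK, hu.ne', hsc, hht]
      try ring_nf
      try field_simp [hu.ne', hsc, hht, hK]
      try ring
    rw [pd, hev.deriv_eq, deriv_sqrt_combo _ _ hpm, if_neg him, hS]
    have hpi := (hp i).ne'
    set v := Real.sqrt (p m) with hv
    rw [← hvv]
    field_simp [hK, hvpm, hsc, hht]
    try ring_nf
    try field_simp [hvpm, hsc, hht, hK]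
    try ring

lemma sumCv (p : Fin 4 → ℝ) (hp : ∀ i, 0 < p i) (r : Fin 4) :
    ∑ m, Cv p m r m = 0 := by
  have h0 := (hp 0).ne'
  have h1 := (hp 1).ne'
  have h2 := (hp 2).ne'
  have h3 := (hp 3).ne'
  have hr : r = 0 ∨ r = 1 ∨ r = 2 ∨ r = 3 := by omega
  rcases hr with rfl | rfl | rfl | rfl <;>
  · simp (config := {decide := true}) only [Cv, CC, kron, Fin.sum_univ_four,
      if_true, if_false]
    field_simp
    ring

lemma sumT3 (σ : (Fin 4 → ℝ) → ℝ) (h : ℝ → ℝ) (K t : ℝ) (x p : Fin 4 → ℝ)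
    (hp : ∀ i, 0 < p i) (i : Fin 4) :
    ∑ m, ∑ r, Tm σ h K t x p m r * Cv p r i m = 0 := by
  have hpi := (hp i).ne'
  have key : ∀ m r : Fin 4, Tm σ h K t x p m r * Cv p r i m
      = ((h t)⁻¹ * Real.exp (2 * σ x) / Real.sqrt (∏ k, p k) / (8 * K)
          + kron r m * ((h t)⁻¹ * Real.exp (2 * σ x) / Real.sqrt (∏ k, p k) / (4 * K)
            + 2 * Real.exp (-2 * σ x) * Real.sqrt (∏ k, p k) * sig11 σ x p / K))
        * CC r i m / p i := by
    intro m r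
    have hpm := (hp m).ne'
    have hpr := (hp r).ne'
    rw [Tm, Cv]
    set A : ℝ := (h t)⁻¹ * Real.exp (2 * σ x) / Real.sqrt (∏ k, p k) / (8 * K) with hA
    set G : ℝ := (h t)⁻¹ * Real.exp (2 * σ x) / Real.sqrt (∏ k, p k) / (4 * K)
        + 2 * Real.exp (-2 * σ x) * Real.sqrt (∏ k, p k) * sig11 σ x p / K with hG
    by_cases hrm : r = m
    · subst hrm
      rw [kron, if_pos rfl]
      field_simp [hpm, hpr, hpi]
    · rw [kron, if_neg hrm]
      field_simp [hpm, hpr, hpi]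
      ring
  simp only [key]
  have hi : i = 0 ∨ i = 1 ∨ i = 2 ∨ i = 3 := by omega
  rcases hi with rfl | rfl | rfl | rfl <;>
  · simp (config := {decide := true}) only [Fin.sum_univ_four, CC, kron,
      if_true, if_false]
    norm_num
    ring_nf

/-- the third geometrical conservation-like law
`Σ_m [ ∂T_{(m)(1)}^{(1)(i)}/∂p_m − Σ_r T_{(r)(1)}^{(1)(i)} C_{m(1)}^{r(m)}
+ Σ_r T_{(m)(1)}^{(1)(r)} C_{r(1)}^{i(m)} ]
= (e^{−2σ} 𝒫^{1/2}/𝒦) [ Σ₁₁/p_i + 2 ∂Σ₁₁/∂p_i ]`. -/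
theorem stmt_17 (σ : (Fin 4 → ℝ) → ℝ) (hσ : ContDiff ℝ (⊤ : ℕ∞) σ)
    (h : ℝ → ℝ) (hh : ContDiff ℝ (⊤ : ℕ∞) h) (hhpos : ∀ t, 0 < h t)
    (K : ℝ) (hK : 0 < K)
    (t : ℝ) (x p : Fin 4 → ℝ) (hp : ∀ i, 0 < p i) (i : Fin 4) :
    (∑ m, (pd (fun p' => Tm σ h K t x p' m i) m p
            - (∑ r, Tm σ h K t x p r i * Cv p m r m)
            + ∑ r, Tm σ h K t x p m r * Cv p r i m))
    = Real.exp (-2 * σ x) * Real.sqrt (∏ k, p k) / K *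
        (sig11 σ x p / p i + 2 * pd (fun p' => sig11 σ x p') i p) := by
  have hK0 : K ≠ 0 := hK.ne'
  have hht : h t ≠ 0 := (hhpos t).ne'
  have hS : Real.sqrt (∏ k, p k) ≠ 0 :=
    (Real.sqrt_pos.mpr (Finset.prod_pos fun k _ => hp k)).ne'
  have hsplit : (∑ m, (pd (fun p' => Tm σ h K t x p' m i) m p
            - (∑ r, Tm σ h K t x p r i * Cv p m r m)
            + ∑ r, Tm σ h K t x p m r * Cv p r i m))
      = (∑ m, pd (fun p' => Tm σ h K t x p' m i) m p)
        - (∑ m, ∑ r, Tm σ h K t x p r i * Cv p m r m)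
        + (∑ m, ∑ r, Tm σ h K t x p m r * Cv p r i m) := by
    rw [Finset.sum_add_distrib, Finset.sum_sub_distrib]
  have h2 : (∑ m, ∑ r, Tm σ h K t x p r i * Cv p m r m) = 0 := by
    rw [Finset.sum_comm]
    refine Finset.sum_eq_zero fun r _ => ?_
    rw [← Finset.mul_sum, sumCv p hp r, mul_zero]
  rw [hsplit, h2, sumT3 σ h K t x p hp i, pd_sig11 σ x p hp i]
  have hpd : ∀ m, pd (fun p' => Tm σ h K t x p' m i) m p =
      if i = m then
        2 * Real.exp (-2*σ x) * Real.sqrt (∏ k, p k) / K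
            * (sig11 σ x p - 2 * Sm σ x p m) / (2 * p m)
          - 3 * ((h t)⁻¹ * Real.exp (2*σ x) / Real.sqrt (∏ k, p k)) / (16 * K * p m)
      else (h t)⁻¹ * Real.exp (2*σ x) / Real.sqrt (∏ k, p k) / (16 * K * p i) :=
    fun m => pd_Tm σ h K t x p hp hK0 hht m i
  rw [Fin.sum_univ_four, hpd 0, hpd 1, hpd 2, hpd 3]
  have hpi := (hp i).ne'
  have hi : i = 0 ∨ i = 1 ∨ i = 2 ∨ i = 3 := by omega
  rcases hi with rfl | rfl | rfl | rfl <;>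
  · simp (config := {decide := true}) only [if_true, if_false, reduceIte]
    field_simp [hK0, hht, hS, hpi]
    ring
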